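/- arXiv:1202.1938 — 3 statements merged into one kernel-verified Lean document; each statement's English description precedes it below -/
import Mathlib

section
/- Let A be a bialgebra and M₁, M₂ tetramodules over A. Then the vector space M₁ ⊗_k M₂ equipped with the operations a·(m₁⊠m₂) = (a·m₁)⊠m₂, (m₁⊠m₂)·a = m₁⊠(m₂·a), Δ_ℓ(m₁⊠m₂) = (Δ_ℓ¹(m₁)*Δ_ℓ¹(m₂)) ⊗ (Δ_ℓ²(m₁)⊠Δ_ℓ²(m₂)), and Δ_r(m₁⊠m₂) = (Δ_r¹(m₁)⊠Δ_r¹(m₂)) ⊗ (Δ_r²(m₁)*Δ_r²(m₂)) is again a tetramodule over A (the first external product M₁ ⊠₁ M₂). -/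
open TensorProduct LinearMap

universe u

namespace TetraPaper

variable (k : Type u) [Field k] (A : Type u) [Ring A] [Bialgebra k A]

/-- The multiplication of `A` as a linear map. -/
noncomputable abbrev mulMap : A ⊗[k] A →ₗ[k] A := LinearMap.mul' k A
/-- The comultiplication of `A`. -/
noncomputable abbrev comulMap : A →ₗ[k] A ⊗[k] A := Coalgebra.comul
/-- The counit of `A`. -/
noncomputable abbrev counitMap : A →ₗ[k] k := Coalgebra.counit

/-- A tetramodule (Bernstein–Khovanova) over the bialgebra `A`:
an `A`-bimodule and `A`-bicomodule structure on `M` satisfying the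
compatibilities (4.10)–(4.13) of the paper. -/
structure TetraStruct (M : Type u) [AddCommGroup M] [Module k M] : Type u where
  ml : A ⊗[k] M →ₗ[k] M
  mr : M ⊗[k] A →ₗ[k] M
  dl : M →ₗ[k] A ⊗[k] M
  dr : M →ₗ[k] M ⊗[k] A
  ml_assoc : ml ∘ₗ rTensor M (mulMap k A) =
    ml ∘ₗ lTensor A ml ∘ₗ (TensorProduct.assoc k A A M).toLinearMap
  ml_one : ∀ m : M, ml ((1 : A) ⊗ₜ[k] m) = m
  mr_assoc : mr ∘ₗ lTensor M (mulMap k A) ∘ₗ (TensorProduct.assoc k M A A).toLinearMap =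
    mr ∘ₗ rTensor A mr
  mr_one : ∀ m : M, mr (m ⊗ₜ[k] (1 : A)) = m
  ml_mr : ml ∘ₗ lTensor A mr ∘ₗ (TensorProduct.assoc k A M A).toLinearMap =
    mr ∘ₗ rTensor A ml
  dl_coassoc : lTensor A dl ∘ₗ dl =
    (TensorProduct.assoc k A A M).toLinearMap ∘ₗ rTensor M (comulMap k A) ∘ₗ dl
  dl_counit : ∀ m : M, TensorProduct.lid k M (rTensor M (counitMap k A) (dl m)) = m
  dr_coassoc : (TensorProduct.assoc k M A A).symm.toLinearMap ∘ₗ lTensor M (comulMap k A) ∘ₗ dr =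
    rTensor A dr ∘ₗ dr
  dr_counit : ∀ m : M, TensorProduct.rid k M (lTensor M (counitMap k A) (dr m)) = m
  dl_dr : lTensor A dr ∘ₗ dl =
    (TensorProduct.assoc k A M A).toLinearMap ∘ₗ rTensor A dl ∘ₗ dr
  compat_ll : dl ∘ₗ ml = TensorProduct.map (mulMap k A) ml ∘ₗ
    (tensorTensorTensorComm k A A A M).toLinearMap ∘ₗ TensorProduct.map (comulMap k A) dl
  compat_lr : dl ∘ₗ mr = TensorProduct.map (mulMap k A) mr ∘ₗ
    (tensorTensorTensorComm k A M A A).toLinearMap ∘ₗ TensorProduct.map dl (comulMap k A)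
  compat_rl : dr ∘ₗ ml = TensorProduct.map ml (mulMap k A) ∘ₗ
    (tensorTensorTensorComm k A A M A).toLinearMap ∘ₗ TensorProduct.map (comulMap k A) dr
  compat_rr : dr ∘ₗ mr = TensorProduct.map mr (mulMap k A) ∘ₗ
    (tensorTensorTensorComm k M A A A).toLinearMap ∘ₗ TensorProduct.map dr (comulMap k A)

variable {k A}

/-- Morphisms of tetramodules. -/
def IsTetraHom {M N : Type u} [AddCommGroup M] [Module k M] [AddCommGroup N] [Module k N]
    (T₁ : TetraStruct k A M) (T₂ : TetraStruct k A N) (f : M →ₗ[k] N) : Prop :=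
  f ∘ₗ T₁.ml = T₂.ml ∘ₗ lTensor A f ∧
  f ∘ₗ T₁.mr = T₂.mr ∘ₗ rTensor A f ∧
  T₂.dl ∘ₗ f = lTensor A f ∘ₗ T₁.dl ∧
  T₂.dr ∘ₗ f = rTensor A f ∘ₗ T₁.dr

end TetraPaper
namespace TetraPaper

variable {k : Type u} [Field k] {A : Type u} [Ring A] [Bialgebra k A]

section combinators

variable (k A)
variable (X Y : Type u) [AddCommGroup X] [Module k X] [AddCommGroup Y] [Module k Y]

/-- Left action of the first external product `⊠₁`: `a·(x⊠y) = (a·x)⊠y`. -/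
noncomputable def b1ml (mlX : A ⊗[k] X →ₗ[k] X) : A ⊗[k] (X ⊗[k] Y) →ₗ[k] X ⊗[k] Y :=
  rTensor Y mlX ∘ₗ (TensorProduct.assoc k A X Y).symm.toLinearMap

/-- Right action of `⊠₁`: `(x⊠y)·a = x⊠(y·a)`. -/
noncomputable def b1mr (mrY : Y ⊗[k] A →ₗ[k] Y) : (X ⊗[k] Y) ⊗[k] A →ₗ[k] X ⊗[k] Y :=
  lTensor X mrY ∘ₗ (TensorProduct.assoc k X Y A).toLinearMap

/-- Left coaction of `⊠₁`: `Δℓ(x⊠y) = (Δℓ¹x * Δℓ¹y) ⊗ (Δℓ²x ⊠ Δℓ²y)`. -/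
noncomputable def b1dl (dlX : X →ₗ[k] A ⊗[k] X) (dlY : Y →ₗ[k] A ⊗[k] Y) :
    X ⊗[k] Y →ₗ[k] A ⊗[k] (X ⊗[k] Y) :=
  TensorProduct.map (mulMap k A) LinearMap.id ∘ₗ
    (tensorTensorTensorComm k A X A Y).toLinearMap ∘ₗ TensorProduct.map dlX dlY

/-- Right coaction of `⊠₁`: `Δr(x⊠y) = (Δr¹x ⊠ Δr¹y) ⊗ (Δr²x * Δr²y)`. -/
noncomputable def b1dr (drX : X →ₗ[k] X ⊗[k] A) (drY : Y →ₗ[k] Y ⊗[k] A) :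
    X ⊗[k] Y →ₗ[k] (X ⊗[k] Y) ⊗[k] A :=
  TensorProduct.map LinearMap.id (mulMap k A) ∘ₗ
    (tensorTensorTensorComm k X A Y A).toLinearMap ∘ₗ TensorProduct.map drX drY

/-- Left action of the second external product `⊠₂`: `a·(x⊠y) = (Δ¹a·x)⊠(Δ²a·y)`. -/
noncomputable def b2ml (mlX : A ⊗[k] X →ₗ[k] X) (mlY : A ⊗[k] Y →ₗ[k] Y) :
    A ⊗[k] (X ⊗[k] Y) →ₗ[k] X ⊗[k] Y :=
  TensorProduct.map mlX mlY ∘ₗ (tensorTensorTensorComm k A A X Y).toLinearMap ∘ₗ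
    rTensor (X ⊗[k] Y) (comulMap k A)

/-- Right action of `⊠₂`: `(x⊠y)·a = (x·Δ¹a)⊠(y·Δ²a)`. -/
noncomputable def b2mr (mrX : X ⊗[k] A →ₗ[k] X) (mrY : Y ⊗[k] A →ₗ[k] Y) :
    (X ⊗[k] Y) ⊗[k] A →ₗ[k] X ⊗[k] Y :=
  TensorProduct.map mrX mrY ∘ₗ (tensorTensorTensorComm k X Y A A).toLinearMap ∘ₗ
    lTensor (X ⊗[k] Y) (comulMap k A)

/-- Left coaction of `⊠₂`: `Δℓ(x⊠y) = Δℓ¹(x) ⊗ (Δℓ²x ⊠ y)`. -/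
noncomputable def b2dl (dlX : X →ₗ[k] A ⊗[k] X) : X ⊗[k] Y →ₗ[k] A ⊗[k] (X ⊗[k] Y) :=
  (TensorProduct.assoc k A X Y).toLinearMap ∘ₗ rTensor Y dlX

/-- Right coaction of `⊠₂`: `Δr(x⊠y) = (x ⊠ Δr¹y) ⊗ Δr²(y)`. -/
noncomputable def b2dr (drY : Y →ₗ[k] Y ⊗[k] A) : X ⊗[k] Y →ₗ[k] (X ⊗[k] Y) ⊗[k] A :=
  (TensorProduct.assoc k X Y A).symm.toLinearMap ∘ₗ lTensor X drY

end combinators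

end TetraPaper
namespace TetraPaper

variable {k : Type u} [Field k] {A : Type u} [Ring A] [Bialgebra k A]
/-! ### Auxiliary infrastructure for the proof -/

section auxdefs

variable (k : Type u) [Field k] (A : Type u) [Ring A] [Bialgebra k A]
variable (M₁ M₂ : Type u) [AddCommGroup M₁] [Module k M₁] [AddCommGroup M₂] [Module k M₂]

/-- `(a⊗x)⊗(b⊗y) ↦ (a*b) ⊗ (x⊗y)`. -/
noncomputable def phiL : (A ⊗[k] M₁) ⊗[k] (A ⊗[k] M₂) →ₗ[k] A ⊗[k] (M₁ ⊗[k] M₂) :=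
  TensorProduct.map (mulMap k A) LinearMap.id ∘ₗ
    (tensorTensorTensorComm k A M₁ A M₂).toLinearMap

/-- `(x⊗a)⊗(y⊗b) ↦ (x⊗y) ⊗ (a*b)`. -/
noncomputable def phiR : (M₁ ⊗[k] A) ⊗[k] (M₂ ⊗[k] A) →ₗ[k] (M₁ ⊗[k] M₂) ⊗[k] A :=
  TensorProduct.map LinearMap.id (mulMap k A) ∘ₗ
    (tensorTensorTensorComm k M₁ A M₂ A).toLinearMap

@[simp] lemma phiL_tmul (a b : A) (x : M₁) (y : M₂) :
    phiL k A M₁ M₂ ((a ⊗ₜ[k] x) ⊗ₜ[k] (b ⊗ₜ[k] y)) = (a * b) ⊗ₜ[k] (x ⊗ₜ[k] y) := by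
  simp [phiL]

@[simp] lemma phiR_tmul (a b : A) (x : M₁) (y : M₂) :
    phiR k A M₁ M₂ ((x ⊗ₜ[k] a) ⊗ₜ[k] (y ⊗ₜ[k] b)) = (x ⊗ₜ[k] y) ⊗ₜ[k] (a * b) := by
  simp [phiR]

@[simp] lemma b1ml_tmul (f : A ⊗[k] M₁ →ₗ[k] M₁) (a : A) (x : M₁) (y : M₂) :
    b1ml k A M₁ M₂ f (a ⊗ₜ[k] (x ⊗ₜ[k] y)) = f (a ⊗ₜ[k] x) ⊗ₜ[k] y := by
  simp [b1ml]

@[simp] lemma b1mr_tmul (g : M₂ ⊗[k] A →ₗ[k] M₂) (a : A) (x : M₁) (y : M₂) :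
    b1mr k A M₁ M₂ g ((x ⊗ₜ[k] y) ⊗ₜ[k] a) = x ⊗ₜ[k] g (y ⊗ₜ[k] a) := by
  simp [b1mr]

@[simp] lemma b1dl_tmul (f : M₁ →ₗ[k] A ⊗[k] M₁) (g : M₂ →ₗ[k] A ⊗[k] M₂) (x : M₁) (y : M₂) :
    b1dl k A M₁ M₂ f g (x ⊗ₜ[k] y) = phiL k A M₁ M₂ (f x ⊗ₜ[k] g y) := by
  simp [b1dl, phiL]

@[simp] lemma b1dr_tmul (f : M₁ →ₗ[k] M₁ ⊗[k] A) (g : M₂ →ₗ[k] M₂ ⊗[k] A) (x : M₁) (y : M₂) :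
    b1dr k A M₁ M₂ f g (x ⊗ₜ[k] y) = phiR k A M₁ M₂ (f x ⊗ₜ[k] g y) := by
  simp [b1dr, phiR]

end auxdefs

section applied

variable {k : Type u} [Field k] {A : Type u} [Ring A] [Bialgebra k A]
variable {M : Type u} [AddCommGroup M] [Module k M] (T : TetraStruct k A M)

lemma TetraStruct.ml_mul (a b : A) (m : M) :
    T.ml ((a * b) ⊗ₜ[k] m) = T.ml (a ⊗ₜ[k] T.ml (b ⊗ₜ[k] m)) := by
  simpa using LinearMap.congr_fun T.ml_assoc ((a ⊗ₜ[k] b) ⊗ₜ[k] m)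

lemma TetraStruct.mr_mul (a b : A) (m : M) :
    T.mr (m ⊗ₜ[k] (a * b)) = T.mr (T.mr (m ⊗ₜ[k] a) ⊗ₜ[k] b) := by
  simpa using LinearMap.congr_fun T.mr_assoc ((m ⊗ₜ[k] a) ⊗ₜ[k] b)

lemma TetraStruct.ml_mr_apply (a b : A) (m : M) :
    T.ml (a ⊗ₜ[k] T.mr (m ⊗ₜ[k] b)) = T.mr (T.ml (a ⊗ₜ[k] m) ⊗ₜ[k] b) := by
  simpa using LinearMap.congr_fun T.ml_mr ((a ⊗ₜ[k] m) ⊗ₜ[k] b)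

lemma TetraStruct.dl_coassoc_apply (m : M) :
    lTensor A T.dl (T.dl m) =
      (TensorProduct.assoc k A A M).toLinearMap (rTensor M (comulMap k A) (T.dl m)) := by
  simpa using LinearMap.congr_fun T.dl_coassoc m

lemma TetraStruct.dr_coassoc_apply (m : M) :
    rTensor A T.dr (T.dr m) =
      (TensorProduct.assoc k M A A).symm.toLinearMap (lTensor M (comulMap k A) (T.dr m)) := by
  simpa using (LinearMap.congr_fun T.dr_coassoc m).symm

lemma TetraStruct.dl_dr_apply (m : M) :
    lTensor A T.dr (T.dl m) =
      (TensorProduct.assoc k A M A).toLinearMap (rTensor A T.dl (T.dr m)) := by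
  simpa using LinearMap.congr_fun T.dl_dr m

lemma TetraStruct.compat_ll_apply (a : A) (m : M) :
    T.dl (T.ml (a ⊗ₜ[k] m)) =
      (TensorProduct.map (mulMap k A) T.ml ∘ₗ (tensorTensorTensorComm k A A A M).toLinearMap)
        (comulMap k A a ⊗ₜ[k] T.dl m) := by
  simpa using LinearMap.congr_fun T.compat_ll (a ⊗ₜ[k] m)

lemma TetraStruct.compat_lr_apply (a : A) (m : M) :
    T.dl (T.mr (m ⊗ₜ[k] a)) =
      (TensorProduct.map (mulMap k A) T.mr ∘ₗ (tensorTensorTensorComm k A M A A).toLinearMap)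
        (T.dl m ⊗ₜ[k] comulMap k A a) := by
  simpa using LinearMap.congr_fun T.compat_lr (m ⊗ₜ[k] a)

lemma TetraStruct.compat_rl_apply (a : A) (m : M) :
    T.dr (T.ml (a ⊗ₜ[k] m)) =
      (TensorProduct.map T.ml (mulMap k A) ∘ₗ (tensorTensorTensorComm k A A M A).toLinearMap)
        (comulMap k A a ⊗ₜ[k] T.dr m) := by
  simpa using LinearMap.congr_fun T.compat_rl (a ⊗ₜ[k] m)

lemma TetraStruct.compat_rr_apply (a : A) (m : M) :
    T.dr (T.mr (m ⊗ₜ[k] a)) =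
      (TensorProduct.map T.mr (mulMap k A) ∘ₗ (tensorTensorTensorComm k M A A A).toLinearMap)
        (T.dr m ⊗ₜ[k] comulMap k A a) := by
  simpa using LinearMap.congr_fun T.compat_rr (m ⊗ₜ[k] a)

end applied

section auxlemmas

variable (k : Type u) [Field k] (A : Type u) [Ring A] [Bialgebra k A]
variable (M₁ M₂ : Type u) [AddCommGroup M₁] [Module k M₁] [AddCommGroup M₂] [Module k M₂]

/-- `(p⊗x)⊗(q⊗y) ↦ (p*q) ⊗ (x⊗y)` on `((A⊗A)⊗M₁)⊗((A⊗A)⊗M₂)`. -/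
noncomputable def thetaL : ((A ⊗[k] A) ⊗[k] M₁) ⊗[k] ((A ⊗[k] A) ⊗[k] M₂) →ₗ[k]
    (A ⊗[k] A) ⊗[k] (M₁ ⊗[k] M₂) :=
  TensorProduct.map (LinearMap.mul' k (A ⊗[k] A)) LinearMap.id ∘ₗ
    (tensorTensorTensorComm k (A ⊗[k] A) M₁ (A ⊗[k] A) M₂).toLinearMap

noncomputable def thetaR : (M₁ ⊗[k] (A ⊗[k] A)) ⊗[k] (M₂ ⊗[k] (A ⊗[k] A)) →ₗ[k]
    (M₁ ⊗[k] M₂) ⊗[k] (A ⊗[k] A) :=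
  TensorProduct.map LinearMap.id (LinearMap.mul' k (A ⊗[k] A)) ∘ₗ
    (tensorTensorTensorComm k M₁ (A ⊗[k] A) M₂ (A ⊗[k] A)).toLinearMap

@[simp] lemma thetaL_tmul (p q : A ⊗[k] A) (x : M₁) (y : M₂) :
    thetaL k A M₁ M₂ ((p ⊗ₜ[k] x) ⊗ₜ[k] (q ⊗ₜ[k] y)) = (p * q) ⊗ₜ[k] (x ⊗ₜ[k] y) := by
  simp [thetaL]

@[simp] lemma thetaR_tmul (p q : A ⊗[k] A) (x : M₁) (y : M₂) :
    thetaR k A M₁ M₂ ((x ⊗ₜ[k] p) ⊗ₜ[k] (y ⊗ₜ[k] q)) = (x ⊗ₜ[k] y) ⊗ₜ[k] (p * q) := by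
  simp [thetaR]

/-- `(a⊗u)⊗(b⊗v) ↦ (a*b) ⊗ phiL(u⊗v)`. -/
noncomputable def psiL : (A ⊗[k] (A ⊗[k] M₁)) ⊗[k] (A ⊗[k] (A ⊗[k] M₂)) →ₗ[k]
    A ⊗[k] (A ⊗[k] (M₁ ⊗[k] M₂)) :=
  TensorProduct.map (mulMap k A) (phiL k A M₁ M₂) ∘ₗ
    (tensorTensorTensorComm k A (A ⊗[k] M₁) A (A ⊗[k] M₂)).toLinearMap

noncomputable def psiR : ((M₁ ⊗[k] A) ⊗[k] A) ⊗[k] ((M₂ ⊗[k] A) ⊗[k] A) →ₗ[k]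
    ((M₁ ⊗[k] M₂) ⊗[k] A) ⊗[k] A :=
  TensorProduct.map (phiR k A M₁ M₂) (mulMap k A) ∘ₗ
    (tensorTensorTensorComm k (M₁ ⊗[k] A) A (M₂ ⊗[k] A) A).toLinearMap

/-- `(a⊗u)⊗(b⊗v) ↦ (a*b) ⊗ phiR(u⊗v)` (mixed, for `dl_dr`). -/
noncomputable def xiL : (A ⊗[k] (M₁ ⊗[k] A)) ⊗[k] (A ⊗[k] (M₂ ⊗[k] A)) →ₗ[k]
    A ⊗[k] ((M₁ ⊗[k] M₂) ⊗[k] A) :=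
  TensorProduct.map (mulMap k A) (phiR k A M₁ M₂) ∘ₗ
    (tensorTensorTensorComm k A (M₁ ⊗[k] A) A (M₂ ⊗[k] A)).toLinearMap

noncomputable def xiR : ((A ⊗[k] M₁) ⊗[k] A) ⊗[k] ((A ⊗[k] M₂) ⊗[k] A) →ₗ[k]
    (A ⊗[k] (M₁ ⊗[k] M₂)) ⊗[k] A :=
  TensorProduct.map (phiL k A M₁ M₂) (mulMap k A) ∘ₗ
    (tensorTensorTensorComm k (A ⊗[k] M₁) A (A ⊗[k] M₂) A).toLinearMap

@[simp] lemma psiL_tmul (a b : A) (u : A ⊗[k] M₁) (v : A ⊗[k] M₂) :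
    psiL k A M₁ M₂ ((a ⊗ₜ[k] u) ⊗ₜ[k] (b ⊗ₜ[k] v)) =
      (a * b) ⊗ₜ[k] phiL k A M₁ M₂ (u ⊗ₜ[k] v) := by
  simp [psiL]

@[simp] lemma psiR_tmul (a b : A) (u : M₁ ⊗[k] A) (v : M₂ ⊗[k] A) :
    psiR k A M₁ M₂ ((u ⊗ₜ[k] a) ⊗ₜ[k] (v ⊗ₜ[k] b)) =
      phiR k A M₁ M₂ (u ⊗ₜ[k] v) ⊗ₜ[k] (a * b) := by
  simp [psiR]

@[simp] lemma xiL_tmul (a b : A) (u : M₁ ⊗[k] A) (v : M₂ ⊗[k] A) :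
    xiL k A M₁ M₂ ((a ⊗ₜ[k] u) ⊗ₜ[k] (b ⊗ₜ[k] v)) =
      (a * b) ⊗ₜ[k] phiR k A M₁ M₂ (u ⊗ₜ[k] v) := by
  simp [xiL]

@[simp] lemma xiR_tmul (a b : A) (u : A ⊗[k] M₁) (v : A ⊗[k] M₂) :
    xiR k A M₁ M₂ ((u ⊗ₜ[k] a) ⊗ₜ[k] (v ⊗ₜ[k] b)) =
      phiL k A M₁ M₂ (u ⊗ₜ[k] v) ⊗ₜ[k] (a * b) := by
  simp [xiR]

/-- auxA : push the external left coaction through `phiL`. -/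
lemma auxA (f : M₁ →ₗ[k] A ⊗[k] M₁) (g : M₂ →ₗ[k] A ⊗[k] M₂) :
    lTensor A (b1dl k A M₁ M₂ f g) ∘ₗ phiL k A M₁ M₂ =
      psiL k A M₁ M₂ ∘ₗ TensorProduct.map (lTensor A f) (lTensor A g) := by
  ext a x b y
  simp

lemma auxA' (f : M₁ →ₗ[k] M₁ ⊗[k] A) (g : M₂ →ₗ[k] M₂ ⊗[k] A) :
    rTensor A (b1dr k A M₁ M₂ f g) ∘ₗ phiR k A M₁ M₂ =
      psiR k A M₁ M₂ ∘ₗ TensorProduct.map (rTensor A f) (rTensor A g) := by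
  ext x a y b
  simp

lemma auxAmix (f : M₁ →ₗ[k] M₁ ⊗[k] A) (g : M₂ →ₗ[k] M₂ ⊗[k] A) :
    lTensor A (b1dr k A M₁ M₂ f g) ∘ₗ phiL k A M₁ M₂ =
      xiL k A M₁ M₂ ∘ₗ TensorProduct.map (lTensor A f) (lTensor A g) := by
  ext a x b y
  simp

lemma auxBmix (f : M₁ →ₗ[k] A ⊗[k] M₁) (g : M₂ →ₗ[k] A ⊗[k] M₂) :
    rTensor A (b1dl k A M₁ M₂ f g) ∘ₗ phiR k A M₁ M₂ =
      xiR k A M₁ M₂ ∘ₗ TensorProduct.map (rTensor A f) (rTensor A g) := by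
  ext x a y b
  simp

/-- auxB : comultiplication through `phiL` (uses `comul_mul`). -/
lemma auxB :
    rTensor (M₁ ⊗[k] M₂) (comulMap k A) ∘ₗ phiL k A M₁ M₂ =
      thetaL k A M₁ M₂ ∘ₗ
        TensorProduct.map (rTensor M₁ (comulMap k A)) (rTensor M₂ (comulMap k A)) := by
  ext a x b y
  simp

lemma auxB' :
    lTensor (M₁ ⊗[k] M₂) (comulMap k A) ∘ₗ phiR k A M₁ M₂ =
      thetaR k A M₁ M₂ ∘ₗ
        TensorProduct.map (lTensor M₁ (comulMap k A)) (lTensor M₂ (comulMap k A)) := by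
  ext x a y b
  simp

/-- auxC : `psiL ∘ (assoc ⊗ assoc) = assoc ∘ thetaL`. -/
lemma auxC :
    psiL k A M₁ M₂ ∘ₗ
        TensorProduct.map (TensorProduct.assoc k A A M₁).toLinearMap
          (TensorProduct.assoc k A A M₂).toLinearMap =
      (TensorProduct.assoc k A A (M₁ ⊗[k] M₂)).toLinearMap ∘ₗ thetaL k A M₁ M₂ := by
  ext a a' x b b' y
  simp [Algebra.TensorProduct.tmul_mul_tmul]

lemma auxC' :
    psiR k A M₁ M₂ ∘ₗ
        TensorProduct.map (TensorProduct.assoc k M₁ A A).symm.toLinearMap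
          (TensorProduct.assoc k M₂ A A).symm.toLinearMap =
      (TensorProduct.assoc k (M₁ ⊗[k] M₂) A A).symm.toLinearMap ∘ₗ thetaR k A M₁ M₂ := by
  ext x a a' y b b'
  simp [Algebra.TensorProduct.tmul_mul_tmul]

lemma auxCmix :
    xiL k A M₁ M₂ ∘ₗ
        TensorProduct.map (TensorProduct.assoc k A M₁ A).toLinearMap
          (TensorProduct.assoc k A M₂ A).toLinearMap =
      (TensorProduct.assoc k A (M₁ ⊗[k] M₂) A).toLinearMap ∘ₗ xiR k A M₁ M₂ := by
  ext a x c b y d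
  simp

end auxlemmas

section auxcompat

variable (k : Type u) [Field k] (A : Type u) [Ring A] [Bialgebra k A]
variable (M₁ M₂ : Type u) [AddCommGroup M₁] [Module k M₁] [AddCommGroup M₂] [Module k M₂]

lemma auxCounitL :
    (TensorProduct.lid k (M₁ ⊗[k] M₂)).toLinearMap ∘ₗ
        rTensor (M₁ ⊗[k] M₂) (counitMap k A) ∘ₗ phiL k A M₁ M₂ =
      TensorProduct.map
        ((TensorProduct.lid k M₁).toLinearMap ∘ₗ rTensor M₁ (counitMap k A))
        ((TensorProduct.lid k M₂).toLinearMap ∘ₗ rTensor M₂ (counitMap k A)) := by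
  ext a x b y
  simp [mul_smul, smul_tmul', tmul_smul, smul_comm (Coalgebra.counit a : k)]

lemma auxCounitR :
    (TensorProduct.rid k (M₁ ⊗[k] M₂)).toLinearMap ∘ₗ
        lTensor (M₁ ⊗[k] M₂) (counitMap k A) ∘ₗ phiR k A M₁ M₂ =
      TensorProduct.map
        ((TensorProduct.rid k M₁).toLinearMap ∘ₗ lTensor M₁ (counitMap k A))
        ((TensorProduct.rid k M₂).toLinearMap ∘ₗ lTensor M₂ (counitMap k A)) := by
  ext x a y b
  simp [mul_smul, smul_tmul', tmul_smul, smul_comm (Coalgebra.counit a : k)]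

lemma auxLL (f : A ⊗[k] M₁ →ₗ[k] M₁) :
    phiL k A M₁ M₂ ∘ₗ rTensor (A ⊗[k] M₂)
        (TensorProduct.map (mulMap k A) f ∘ₗ (tensorTensorTensorComm k A A A M₁).toLinearMap) =
      TensorProduct.map (mulMap k A) (b1ml k A M₁ M₂ f) ∘ₗ
        (tensorTensorTensorComm k A A A (M₁ ⊗[k] M₂)).toLinearMap ∘ₗ
        lTensor (A ⊗[k] A) (phiL k A M₁ M₂) ∘ₗ
        (TensorProduct.assoc k (A ⊗[k] A) (A ⊗[k] M₁) (A ⊗[k] M₂)).toLinearMap := by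
  ext a a' b x c y
  simp [mul_assoc]

lemma auxLR (g : M₂ ⊗[k] A →ₗ[k] M₂) :
    phiL k A M₁ M₂ ∘ₗ lTensor (A ⊗[k] M₁)
        (TensorProduct.map (mulMap k A) g ∘ₗ (tensorTensorTensorComm k A M₂ A A).toLinearMap) =
      TensorProduct.map (mulMap k A) (b1mr k A M₁ M₂ g) ∘ₗ
        (tensorTensorTensorComm k A (M₁ ⊗[k] M₂) A A).toLinearMap ∘ₗ
        rTensor (A ⊗[k] A) (phiL k A M₁ M₂) ∘ₗ
        (TensorProduct.assoc k (A ⊗[k] M₁) (A ⊗[k] M₂) (A ⊗[k] A)).symm.toLinearMap := by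
  ext a x b y c c'
  simp [mul_assoc]

lemma auxRL (f : A ⊗[k] M₁ →ₗ[k] M₁) :
    phiR k A M₁ M₂ ∘ₗ rTensor (M₂ ⊗[k] A)
        (TensorProduct.map f (mulMap k A) ∘ₗ (tensorTensorTensorComm k A A M₁ A).toLinearMap) =
      TensorProduct.map (b1ml k A M₁ M₂ f) (mulMap k A) ∘ₗ
        (tensorTensorTensorComm k A A (M₁ ⊗[k] M₂) A).toLinearMap ∘ₗ
        lTensor (A ⊗[k] A) (phiR k A M₁ M₂) ∘ₗ
        (TensorProduct.assoc k (A ⊗[k] A) (M₁ ⊗[k] A) (M₂ ⊗[k] A)).toLinearMap := by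
  ext a a' x b y c
  simp [mul_assoc]

lemma auxRR (g : M₂ ⊗[k] A →ₗ[k] M₂) :
    phiR k A M₁ M₂ ∘ₗ lTensor (M₁ ⊗[k] A)
        (TensorProduct.map g (mulMap k A) ∘ₗ (tensorTensorTensorComm k M₂ A A A).toLinearMap) =
      TensorProduct.map (b1mr k A M₁ M₂ g) (mulMap k A) ∘ₗ
        (tensorTensorTensorComm k (M₁ ⊗[k] M₂) A A A).toLinearMap ∘ₗ
        rTensor (A ⊗[k] A) (phiR k A M₁ M₂) ∘ₗ
        (TensorProduct.assoc k (M₁ ⊗[k] A) (M₂ ⊗[k] A) (A ⊗[k] A)).symm.toLinearMap := by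
  ext x a y b c c'
  simp [mul_assoc]

end auxcompat

section boxlemmas

variable {k : Type u} [Field k] {A : Type u} [Ring A] [Bialgebra k A]
variable {M₁ M₂ : Type u} [AddCommGroup M₁] [Module k M₁] [AddCommGroup M₂] [Module k M₂]
variable (T₁ : TetraStruct k A M₁) (T₂ : TetraStruct k A M₂)

lemma box_ml_assoc :
    b1ml k A M₁ M₂ T₁.ml ∘ₗ rTensor (M₁ ⊗[k] M₂) (mulMap k A) =
      b1ml k A M₁ M₂ T₁.ml ∘ₗ lTensor A (b1ml k A M₁ M₂ T₁.ml) ∘ₗ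
        (TensorProduct.assoc k A A (M₁ ⊗[k] M₂)).toLinearMap := by
  ext a b x y
  simp [T₁.ml_mul]

lemma box_ml_one : ∀ m : M₁ ⊗[k] M₂, b1ml k A M₁ M₂ T₁.ml ((1 : A) ⊗ₜ[k] m) = m := by
  intro m
  induction m using TensorProduct.induction_on with
  | zero => simp
  | tmul x y => simp [T₁.ml_one]
  | add m m' hm hm' => simp [tmul_add, hm, hm']

lemma box_mr_assoc :
    b1mr k A M₁ M₂ T₂.mr ∘ₗ lTensor (M₁ ⊗[k] M₂) (mulMap k A) ∘ₗ
        (TensorProduct.assoc k (M₁ ⊗[k] M₂) A A).toLinearMap =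
      b1mr k A M₁ M₂ T₂.mr ∘ₗ rTensor A (b1mr k A M₁ M₂ T₂.mr) := by
  ext x y a b
  simp [T₂.mr_mul]

lemma box_mr_one : ∀ m : M₁ ⊗[k] M₂, b1mr k A M₁ M₂ T₂.mr (m ⊗ₜ[k] (1 : A)) = m := by
  intro m
  induction m using TensorProduct.induction_on with
  | zero => simp
  | tmul x y => simp [T₂.mr_one]
  | add m m' hm hm' => simp [add_tmul, hm, hm']

lemma box_ml_mr :
    b1ml k A M₁ M₂ T₁.ml ∘ₗ lTensor A (b1mr k A M₁ M₂ T₂.mr) ∘ₗ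
        (TensorProduct.assoc k A (M₁ ⊗[k] M₂) A).toLinearMap =
      b1mr k A M₁ M₂ T₂.mr ∘ₗ rTensor A (b1ml k A M₁ M₂ T₁.ml) := by
  ext a x y b
  simp

lemma box_dl_coassoc :
    lTensor A (b1dl k A M₁ M₂ T₁.dl T₂.dl) ∘ₗ b1dl k A M₁ M₂ T₁.dl T₂.dl =
      (TensorProduct.assoc k A A (M₁ ⊗[k] M₂)).toLinearMap ∘ₗ
        rTensor (M₁ ⊗[k] M₂) (comulMap k A) ∘ₗ b1dl k A M₁ M₂ T₁.dl T₂.dl := by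
  apply TensorProduct.ext'
  intro x y
  have h1 := LinearMap.congr_fun (auxA k A M₁ M₂ T₁.dl T₂.dl) (T₁.dl x ⊗ₜ[k] T₂.dl y)
  have h2 := LinearMap.congr_fun (auxB k A M₁ M₂) (T₁.dl x ⊗ₜ[k] T₂.dl y)
  have h3 := LinearMap.congr_fun (auxC k A M₁ M₂)
    (rTensor M₁ (comulMap k A) (T₁.dl x) ⊗ₜ[k] rTensor M₂ (comulMap k A) (T₂.dl y))
  simp only [LinearMap.comp_apply, TensorProduct.map_tmul, LinearEquiv.coe_coe] at h1 h2 h3 ⊢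
  rw [b1dl_tmul, h1, T₁.dl_coassoc_apply, T₂.dl_coassoc_apply]
  simp only [LinearEquiv.coe_coe] at *
  rw [h3, h2]

lemma box_dl_counit : ∀ m : M₁ ⊗[k] M₂,
    TensorProduct.lid k (M₁ ⊗[k] M₂)
      (rTensor (M₁ ⊗[k] M₂) (counitMap k A) (b1dl k A M₁ M₂ T₁.dl T₂.dl m)) = m := by
  intro m
  induction m using TensorProduct.induction_on with
  | zero => simp
  | tmul x y =>
      have h := LinearMap.congr_fun (auxCounitL k A M₁ M₂) (T₁.dl x ⊗ₜ[k] T₂.dl y)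
      simp only [LinearMap.comp_apply, TensorProduct.map_tmul, LinearEquiv.coe_coe] at h
      rw [b1dl_tmul, h, T₁.dl_counit, T₂.dl_counit]
  | add m m' hm hm' => simp only [map_add, hm, hm']

lemma box_dr_coassoc :
    (TensorProduct.assoc k (M₁ ⊗[k] M₂) A A).symm.toLinearMap ∘ₗ
        lTensor (M₁ ⊗[k] M₂) (comulMap k A) ∘ₗ b1dr k A M₁ M₂ T₁.dr T₂.dr =
      rTensor A (b1dr k A M₁ M₂ T₁.dr T₂.dr) ∘ₗ b1dr k A M₁ M₂ T₁.dr T₂.dr := by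
  apply TensorProduct.ext'
  intro x y
  have h1 := LinearMap.congr_fun (auxA' k A M₁ M₂ T₁.dr T₂.dr) (T₁.dr x ⊗ₜ[k] T₂.dr y)
  have h2 := LinearMap.congr_fun (auxB' k A M₁ M₂) (T₁.dr x ⊗ₜ[k] T₂.dr y)
  have h3 := LinearMap.congr_fun (auxC' k A M₁ M₂)
    (lTensor M₁ (comulMap k A) (T₁.dr x) ⊗ₜ[k] lTensor M₂ (comulMap k A) (T₂.dr y))
  simp only [LinearMap.comp_apply, TensorProduct.map_tmul, LinearEquiv.coe_coe] at h1 h2 h3 ⊢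
  rw [b1dr_tmul, h1, T₁.dr_coassoc_apply, T₂.dr_coassoc_apply]
  simp only [LinearEquiv.coe_coe] at *
  rw [h3, h2]

lemma box_dr_counit : ∀ m : M₁ ⊗[k] M₂,
    TensorProduct.rid k (M₁ ⊗[k] M₂)
      (lTensor (M₁ ⊗[k] M₂) (counitMap k A) (b1dr k A M₁ M₂ T₁.dr T₂.dr m)) = m := by
  intro m
  induction m using TensorProduct.induction_on with
  | zero => simp
  | tmul x y =>
      have h := LinearMap.congr_fun (auxCounitR k A M₁ M₂) (T₁.dr x ⊗ₜ[k] T₂.dr y)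
      simp only [LinearMap.comp_apply, TensorProduct.map_tmul, LinearEquiv.coe_coe] at h
      rw [b1dr_tmul, h, T₁.dr_counit, T₂.dr_counit]
  | add m m' hm hm' => simp only [map_add, hm, hm']

lemma box_dl_dr :
    lTensor A (b1dr k A M₁ M₂ T₁.dr T₂.dr) ∘ₗ b1dl k A M₁ M₂ T₁.dl T₂.dl =
      (TensorProduct.assoc k A (M₁ ⊗[k] M₂) A).toLinearMap ∘ₗ
        rTensor A (b1dl k A M₁ M₂ T₁.dl T₂.dl) ∘ₗ b1dr k A M₁ M₂ T₁.dr T₂.dr := by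
  apply TensorProduct.ext'
  intro x y
  have h1 := LinearMap.congr_fun (auxAmix k A M₁ M₂ T₁.dr T₂.dr) (T₁.dl x ⊗ₜ[k] T₂.dl y)
  have h2 := LinearMap.congr_fun (auxBmix k A M₁ M₂ T₁.dl T₂.dl) (T₁.dr x ⊗ₜ[k] T₂.dr y)
  have h3 := LinearMap.congr_fun (auxCmix k A M₁ M₂)
    (rTensor A T₁.dl (T₁.dr x) ⊗ₜ[k] rTensor A T₂.dl (T₂.dr y))
  simp only [LinearMap.comp_apply, TensorProduct.map_tmul, LinearEquiv.coe_coe] at h1 h2 h3 ⊢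
  rw [b1dl_tmul, b1dr_tmul, h1, T₁.dl_dr_apply, T₂.dl_dr_apply]
  simp only [LinearEquiv.coe_coe] at *
  rw [h3, h2]

lemma box_compat_ll :
    b1dl k A M₁ M₂ T₁.dl T₂.dl ∘ₗ b1ml k A M₁ M₂ T₁.ml =
      TensorProduct.map (mulMap k A) (b1ml k A M₁ M₂ T₁.ml) ∘ₗ
        (tensorTensorTensorComm k A A A (M₁ ⊗[k] M₂)).toLinearMap ∘ₗ
        TensorProduct.map (comulMap k A) (b1dl k A M₁ M₂ T₁.dl T₂.dl) := by
  apply TensorProduct.ext'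
  intro a m
  induction m using TensorProduct.induction_on with
  | zero => simp [tmul_zero]
  | tmul x y =>
      have h := LinearMap.congr_fun (auxLL k A M₁ M₂ T₁.ml)
        ((comulMap k A a ⊗ₜ[k] T₁.dl x) ⊗ₜ[k] T₂.dl y)
      simp only [LinearMap.comp_apply, TensorProduct.map_tmul, LinearEquiv.coe_coe,
        LinearMap.rTensor_tmul, LinearMap.lTensor_tmul, TensorProduct.assoc_tmul] at h ⊢
      rw [b1ml_tmul, b1dl_tmul, b1dl_tmul, T₁.compat_ll_apply]
      simp only [LinearMap.comp_apply, LinearEquiv.coe_coe]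
      exact h
  | add m m' hm hm' =>
      simp only [tmul_add, map_add, hm, hm']

lemma box_compat_lr :
    b1dl k A M₁ M₂ T₁.dl T₂.dl ∘ₗ b1mr k A M₁ M₂ T₂.mr =
      TensorProduct.map (mulMap k A) (b1mr k A M₁ M₂ T₂.mr) ∘ₗ
        (tensorTensorTensorComm k A (M₁ ⊗[k] M₂) A A).toLinearMap ∘ₗ
        TensorProduct.map (b1dl k A M₁ M₂ T₁.dl T₂.dl) (comulMap k A) := by
  apply TensorProduct.ext'
  intro m a
  induction m using TensorProduct.induction_on with
  | zero => simp [zero_tmul]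
  | tmul x y =>
      have h := LinearMap.congr_fun (auxLR k A M₁ M₂ T₂.mr)
        (T₁.dl x ⊗ₜ[k] (T₂.dl y ⊗ₜ[k] comulMap k A a))
      simp only [LinearMap.comp_apply, TensorProduct.map_tmul, LinearEquiv.coe_coe,
        LinearMap.rTensor_tmul, LinearMap.lTensor_tmul,
        TensorProduct.assoc_symm_tmul] at h ⊢
      rw [b1mr_tmul, b1dl_tmul, b1dl_tmul, T₂.compat_lr_apply]
      simp only [LinearMap.comp_apply, LinearEquiv.coe_coe]
      exact h
  | add m m' hm hm' =>
      simp only [add_tmul, map_add, hm, hm']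

lemma box_compat_rl :
    b1dr k A M₁ M₂ T₁.dr T₂.dr ∘ₗ b1ml k A M₁ M₂ T₁.ml =
      TensorProduct.map (b1ml k A M₁ M₂ T₁.ml) (mulMap k A) ∘ₗ
        (tensorTensorTensorComm k A A (M₁ ⊗[k] M₂) A).toLinearMap ∘ₗ
        TensorProduct.map (comulMap k A) (b1dr k A M₁ M₂ T₁.dr T₂.dr) := by
  apply TensorProduct.ext'
  intro a m
  induction m using TensorProduct.induction_on with
  | zero => simp [tmul_zero]
  | tmul x y =>
      have h := LinearMap.congr_fun (auxRL k A M₁ M₂ T₁.ml)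
        ((comulMap k A a ⊗ₜ[k] T₁.dr x) ⊗ₜ[k] T₂.dr y)
      simp only [LinearMap.comp_apply, TensorProduct.map_tmul, LinearEquiv.coe_coe,
        LinearMap.rTensor_tmul, LinearMap.lTensor_tmul, TensorProduct.assoc_tmul] at h ⊢
      rw [b1ml_tmul, b1dr_tmul, b1dr_tmul, T₁.compat_rl_apply]
      simp only [LinearMap.comp_apply, LinearEquiv.coe_coe]
      exact h
  | add m m' hm hm' =>
      simp only [tmul_add, map_add, hm, hm']

lemma box_compat_rr :
    b1dr k A M₁ M₂ T₁.dr T₂.dr ∘ₗ b1mr k A M₁ M₂ T₂.mr =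
      TensorProduct.map (b1mr k A M₁ M₂ T₂.mr) (mulMap k A) ∘ₗ
        (tensorTensorTensorComm k (M₁ ⊗[k] M₂) A A A).toLinearMap ∘ₗ
        TensorProduct.map (b1dr k A M₁ M₂ T₁.dr T₂.dr) (comulMap k A) := by
  apply TensorProduct.ext'
  intro m a
  induction m using TensorProduct.induction_on with
  | zero => simp [zero_tmul]
  | tmul x y =>
      have h := LinearMap.congr_fun (auxRR k A M₁ M₂ T₂.mr)
        (T₁.dr x ⊗ₜ[k] (T₂.dr y ⊗ₜ[k] comulMap k A a))
      simp only [LinearMap.comp_apply, TensorProduct.map_tmul, LinearEquiv.coe_coe,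
        LinearMap.rTensor_tmul, LinearMap.lTensor_tmul,
        TensorProduct.assoc_symm_tmul] at h ⊢
      rw [b1mr_tmul, b1dr_tmul, b1dr_tmul, T₂.compat_rr_apply]
      simp only [LinearMap.comp_apply, LinearEquiv.coe_coe]
      exact h
  | add m m' hm hm' =>
      simp only [add_tmul, map_add, hm, hm']

end boxlemmas

variable {k : Type u} [Field k] {A : Type u} [Ring A] [Bialgebra k A]
variable {M₁ M₂ : Type u} [AddCommGroup M₁] [Module k M₁] [AddCommGroup M₂] [Module k M₂]

/-- For tetramodules `M₁, M₂` over `A`, the vector space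
`M₁ ⊗ₖ M₂` equipped with the outer actions `a·(m₁⊠m₂) = (a·m₁)⊠m₂`,
`(m₁⊠m₂)·a = m₁⊠(m₂·a)` and the diagonal coactions
`Δℓ(m₁⊠m₂) = (Δℓ¹m₁ * Δℓ¹m₂) ⊗ (Δℓ²m₁ ⊠ Δℓ²m₂)`,
`Δr(m₁⊠m₂) = (Δr¹m₁ ⊠ Δr¹m₂) ⊗ (Δr²m₁ * Δr²m₂)` is again a tetramodule
(the first external product `M₁ ⊠₁ M₂`). -/
theorem boxt1_isTetra (T₁ : TetraStruct k A M₁) (T₂ : TetraStruct k A M₂) :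
    ∃ T : TetraStruct k A (M₁ ⊗[k] M₂),
      T.ml = b1ml k A M₁ M₂ T₁.ml ∧
      T.mr = b1mr k A M₁ M₂ T₂.mr ∧
      T.dl = b1dl k A M₁ M₂ T₁.dl T₂.dl ∧
      T.dr = b1dr k A M₁ M₂ T₁.dr T₂.dr := by
  exact ⟨{
    ml := b1ml k A M₁ M₂ T₁.ml
    mr := b1mr k A M₁ M₂ T₂.mr
    dl := b1dl k A M₁ M₂ T₁.dl T₂.dl
    dr := b1dr k A M₁ M₂ T₁.dr T₂.dr
    ml_assoc := box_ml_assoc T₁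
    ml_one := box_ml_one T₁
    mr_assoc := box_mr_assoc T₂
    mr_one := box_mr_one T₂
    ml_mr := box_ml_mr T₁ T₂
    dl_coassoc := box_dl_coassoc T₁ T₂
    dl_counit := box_dl_counit T₁ T₂
    dr_coassoc := box_dr_coassoc T₁ T₂
    dr_counit := box_dr_counit T₁ T₂
    dl_dr := box_dl_dr T₁ T₂
    compat_ll := box_compat_ll T₁ T₂
    compat_lr := box_compat_lr T₁ T₂
    compat_rl := box_compat_rl T₁ T₂
    compat_rr := box_compat_rr T₁ T₂ }, rfl, rfl, rfl, rfl⟩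

end TetraPaper
end

section
/- Let C be a (strict) braided monoidal category with braiding c. Define ⊗₁ = ⊗₂ = ⊗ and η_{A,B,C,D} = id_A ⊗ c_{B,C} ⊗ id_D : (A⊗B)⊗(C⊗D) → (A⊗C)⊗(B⊗D). Then (C, ⊗₁, ⊗₂, η) is a 2-fold monoidal category: η is a natural transformation satisfying the internal and external unit conditions and making the internal associativity hexagon and external associativity hexagon commute. -/
open CategoryTheory Category MonoidalCategory

universe v u

/-- Let `C` be a braided monoidal category. Setting
`⊗₁ = ⊗₂ = ⊗` and `η_{A,B,C,D} = id_A ⊗ c_{B,C} ⊗ id_D` (the map `tensorμ`),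
`(C, ⊗₁, ⊗₂, η)` is a 2-fold monoidal category: `η` is natural, satisfies the
internal and external unit conditions, and makes the internal and external
associativity hexagons commute. -/
theorem braided_is_twofold_monoidal (C : Type u) [Category.{v} C] [MonoidalCategory C]
    [BraidedCategory C] :
    -- naturality of the interchange η = tensorμ
    (∀ {X₁ X₂ Y₁ Y₂ U₁ U₂ V₁ V₂ : C} (f₁ : X₁ ⟶ Y₁) (f₂ : X₂ ⟶ Y₂)
      (g₁ : U₁ ⟶ V₁) (g₂ : U₂ ⟶ V₂),
      ((f₁ ⊗ₘ f₂) ⊗ₘ g₁ ⊗ₘ g₂) ≫ tensorμ Y₁ Y₂ V₁ V₂ =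
        tensorμ X₁ X₂ U₁ U₂ ≫ ((f₁ ⊗ₘ g₁) ⊗ₘ f₂ ⊗ₘ g₂)) ∧
    -- internal unit conditions: η_{A,B,𝟙,𝟙} = η_{𝟙,𝟙,A,B} = id_{A⊗₂B}
    (∀ A B : C, tensorμ A B (𝟙_ C) (𝟙_ C) ≫ ((ρ_ A).hom ⊗ₘ (ρ_ B).hom) =
      ((A ⊗ B) ◁ (λ_ (𝟙_ C)).hom) ≫ (ρ_ (A ⊗ B)).hom) ∧
    (∀ A B : C, tensorμ (𝟙_ C) (𝟙_ C) A B ≫ ((λ_ A).hom ⊗ₘ (λ_ B).hom) =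
      ((λ_ (𝟙_ C)).hom ▷ (A ⊗ B)) ≫ (λ_ (A ⊗ B)).hom) ∧
    -- external unit conditions: η_{A,𝟙,B,𝟙} = η_{𝟙,A,𝟙,B} = id_{A⊗₁B}
    (∀ A B : C, ((ρ_ A).hom ⊗ₘ (ρ_ B).hom) =
      tensorμ A (𝟙_ C) B (𝟙_ C) ≫ ((A ⊗ B) ◁ (λ_ (𝟙_ C)).hom) ≫ (ρ_ (A ⊗ B)).hom) ∧
    (∀ A B : C, ((λ_ A).hom ⊗ₘ (λ_ B).hom) =
      tensorμ (𝟙_ C) A (𝟙_ C) B ≫ ((λ_ (𝟙_ C)).hom ▷ (A ⊗ B)) ≫ (λ_ (A ⊗ B)).hom) ∧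
    -- internal associativity hexagon
    (∀ U V W X Y Z : C,
      (tensorμ U V W X ▷ (Y ⊗ Z)) ≫ tensorμ (U ⊗ W) (V ⊗ X) Y Z ≫
          ((α_ U W Y).hom ⊗ₘ (α_ V X Z).hom) =
        (α_ (U ⊗ V) (W ⊗ X) (Y ⊗ Z)).hom ≫ ((U ⊗ V) ◁ tensorμ W X Y Z) ≫
          tensorμ U V (W ⊗ Y) (X ⊗ Z)) ∧
    -- external associativity hexagon
    (∀ U V W X Y Z : C,
      ((α_ U V W).hom ⊗ₘ (α_ X Y Z).hom) ≫ tensorμ U (V ⊗ W) X (Y ⊗ Z) ≫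
          ((U ⊗ X) ◁ tensorμ V W Y Z) =
        tensorμ (U ⊗ V) W (X ⊗ Y) Z ≫ (tensorμ U V X Y ▷ (W ⊗ Z)) ≫
          (α_ (U ⊗ X) (V ⊗ Y) (W ⊗ Z)).hom) := by
  refine ⟨fun f₁ f₂ g₁ g₂ => tensorμ_natural f₁ f₂ g₁ g₂, ?_, ?_, ?_, ?_,
    fun U V W X Y Z => tensor_associativity U V W X Y Z,
    fun U V W X Y Z => ?_⟩
  · intro A B
    rw [tensor_right_unitality, ← MonoidalCategory.whiskerLeft_comp_assoc]; simp
  · intro A B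
    rw [tensor_left_unitality, ← MonoidalCategory.comp_whiskerRight_assoc]; simp
  · intro A B; exact rightUnitor_monoidal A B
  · intro A B; exact leftUnitor_monoidal A B
  · rw [← associator_monoidal]
end

section
/- Let 𝒜, ℬ be abelian categories and {T_n : 𝒜 → ℬ}_{n≥0} a cohomological δ-functor such that each T_n for n ≥ 1 is effaceable (for every object M there is a monomorphism j: M → I with T_n(j) = 0). Then {T_n} is a universal δ-functor: any natural transformation f₀: T₀ → S₀ to the degree-zero part of another cohomological δ-functor {S_n} extends uniquely to a morphism of δ-functors {f_n: T_n → S_n}. -/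
open CategoryTheory Category Limits

universe w v v' u u'

namespace PQPaper

variable (C : Type u) (D : Type u') [Category.{v} C] [Category.{v'} D]
  [Abelian C] [Abelian D]

/-- A cohomological δ-functor `{T_n}` from `C` to `D` : a sequence of additive
functors together with connecting morphisms `δ : T_n(X₃) ⟶ T_{n+1}(X₁)` for
every short exact sequence `0 → X₁ → X₂ → X₃ → 0`, natural in the short exact
sequence, such that the resulting long sequence is exact. -/
structure CohDeltaFunctor where
  T : ℕ → C ⥤ D
  additive : ∀ n, (T n).Additive
  δ : ∀ (S : ShortComplex C), S.ShortExact → ∀ n : ℕ, (T n).obj S.X₃ ⟶ (T (n + 1)).obj S.X₁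
  /-- naturality of `δ` in the short exact sequence -/
  δ_natural : ∀ (S S' : ShortComplex C) (hS : S.ShortExact) (hS' : S'.ShortExact)
    (φ : S ⟶ S') (n : ℕ),
    (T n).map φ.τ₃ ≫ δ S' hS' n = δ S hS n ≫ (T (n + 1)).map φ.τ₁
  zero₁ : ∀ (S : ShortComplex C) (_ : S.ShortExact) (n : ℕ),
    (T n).map S.f ≫ (T n).map S.g = 0
  zero₂ : ∀ (S : ShortComplex C) (hS : S.ShortExact) (n : ℕ),
    (T n).map S.g ≫ δ S hS n = 0
  zero₃ : ∀ (S : ShortComplex C) (hS : S.ShortExact) (n : ℕ),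
    δ S hS n ≫ (T (n + 1)).map S.f = 0
  /-- exactness of the long sequence at `T_n(X₂)` -/
  exact₁ : ∀ (S : ShortComplex C) (hS : S.ShortExact) (n : ℕ),
    (ShortComplex.mk _ _ (zero₁ S hS n)).Exact
  /-- exactness of the long sequence at `T_n(X₃)` -/
  exact₂ : ∀ (S : ShortComplex C) (hS : S.ShortExact) (n : ℕ),
    (ShortComplex.mk _ _ (zero₂ S hS n)).Exact
  /-- exactness of the long sequence at `T_{n+1}(X₁)` -/
  exact₃ : ∀ (S : ShortComplex C) (hS : S.ShortExact) (n : ℕ),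
    (ShortComplex.mk _ _ (zero₃ S hS n)).Exact

variable {C D}

/-- A morphism of δ-functors: a family of natural transformations commuting
with the connecting morphisms `δ`. -/
def IsDeltaMorphism (T S : CohDeltaFunctor C D) (f : ∀ n, T.T n ⟶ S.T n) : Prop :=
  ∀ (Sx : ShortComplex C) (hS : Sx.ShortExact) (n : ℕ),
    T.δ Sx hS n ≫ (f (n + 1)).app Sx.X₁ = (f n).app Sx.X₃ ≫ S.δ Sx hS n

end PQPaper
namespace PQPaper

section Aux

variable {C : Type u} {D : Type u'} [Category.{v} C] [Category.{v'} D]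
  [Abelian C] [Abelian D]

/-- The short exact sequence `0 → M → I → coker j → 0` attached to a mono `j : M ⟶ I`. -/
noncomputable abbrev effS {M I : C} (j : M ⟶ I) : ShortComplex C :=
  ShortComplex.mk j (cokernel.π j) (cokernel.condition j)

lemma effS_SE {M I : C} (j : M ⟶ I) (hj : Mono j) : (effS j).ShortExact := by
  haveI := hj
  exact ShortComplex.ShortExact.mk' (ShortComplex.exact_cokernel j) inferInstance inferInstance

variable (T S : CohDeltaFunctor C D)

lemma epiδ (n : ℕ) {M I : C} (j : M ⟶ I) (hj : Mono j)
    (hj0 : (T.T (n + 1)).map j = 0) :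
    Epi (T.δ (effS j) (effS_SE j hj) n) :=
  (T.exact₃ (effS j) (effS_SE j hj) n).epi_f hj0

/-- The map `T_{n+1}(M) ⟶ S_{n+1}(M)` induced by an effacement `j : M ⟶ I` and
`fₙ : Tₙ ⟶ Sₙ`. -/
noncomputable def Fmap (n : ℕ) (fn : T.T n ⟶ S.T n) {M I : C} (j : M ⟶ I) (hj : Mono j)
    (hj0 : (T.T (n + 1)).map j = 0) :
    (T.T (n + 1)).obj M ⟶ (S.T (n + 1)).obj M :=
  haveI : Epi (ShortComplex.mk _ _ (T.zero₂ (effS j) (effS_SE j hj) n)).g :=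
    epiδ T n j hj hj0
  (T.exact₂ (effS j) (effS_SE j hj) n).desc
    (fn.app (cokernel j) ≫ S.δ (effS j) (effS_SE j hj) n)
    (by
      rw [← assoc]
      erw [fn.naturality (cokernel.π j)]
      rw [assoc, S.zero₂ (effS j) (effS_SE j hj) n, comp_zero])

lemma δ_Fmap (n : ℕ) (fn : T.T n ⟶ S.T n) {M I : C} (j : M ⟶ I) (hj : Mono j)
    (hj0 : (T.T (n + 1)).map j = 0) :
    T.δ (effS j) (effS_SE j hj) n ≫ Fmap T S n fn j hj hj0
      = fn.app (cokernel j) ≫ S.δ (effS j) (effS_SE j hj) n := by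
  haveI : Epi (ShortComplex.mk _ _ (T.zero₂ (effS j) (effS_SE j hj) n)).g :=
    epiδ T n j hj hj0
  exact (T.exact₂ (effS j) (effS_SE j hj) n).g_desc _ _

/-- The key naturality lemma: the maps induced by two compatible effacements are
compatible. -/
lemma Fmap_natural (n : ℕ) (fn : T.T n ⟶ S.T n) {M M' I I' : C} (φ : M ⟶ M')
    (j : M ⟶ I) (hj : Mono j) (hj0 : (T.T (n + 1)).map j = 0)
    (j' : M' ⟶ I') (hj' : Mono j') (hj0' : (T.T (n + 1)).map j' = 0)
    (k : I ⟶ I') (hk : j ≫ k = φ ≫ j') :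
    (T.T (n + 1)).map φ ≫ Fmap T S n fn j' hj' hj0'
      = Fmap T S n fn j hj hj0 ≫ (S.T (n + 1)).map φ := by
  haveI := epiδ T n j hj hj0
  rw [← cancel_epi (T.δ (effS j) (effS_SE j hj) n)]
  let ψ : effS j ⟶ effS j' :=
    { τ₁ := φ
      τ₂ := k
      τ₃ := cokernel.map j j' φ k hk
      comm₁₂ := hk.symm
      comm₂₃ := (cokernel.π_desc _ _ _).symm }
  have hδT := T.δ_natural (effS j) (effS j') (effS_SE j hj) (effS_SE j' hj') ψ n
  have hδS := S.δ_natural (effS j) (effS j') (effS_SE j hj) (effS_SE j' hj') ψ n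
  calc T.δ (effS j) (effS_SE j hj) n ≫ (T.T (n + 1)).map φ ≫ Fmap T S n fn j' hj' hj0'
      = ((T.T n).map ψ.τ₃ ≫ T.δ (effS j') (effS_SE j' hj') n) ≫ Fmap T S n fn j' hj' hj0' := by
        rw [hδT, assoc]
    _ = (T.T n).map ψ.τ₃ ≫ fn.app (cokernel j') ≫ S.δ (effS j') (effS_SE j' hj') n := by
        rw [assoc, δ_Fmap]
    _ = fn.app (cokernel j) ≫ (S.T n).map ψ.τ₃ ≫ S.δ (effS j') (effS_SE j' hj') n := by
        rw [← assoc, ← assoc]; erw [fn.naturality ψ.τ₃]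
    _ = fn.app (cokernel j) ≫ S.δ (effS j) (effS_SE j hj) n ≫ (S.T (n + 1)).map φ := by
        rw [hδS]
    _ = T.δ (effS j) (effS_SE j hj) n ≫ Fmap T S n fn j hj hj0 ≫ (S.T (n + 1)).map φ := by
        rw [← assoc, ← δ_Fmap, assoc]

/-- Two monos with vanishing `T_{n+1}`-image can be combined into a biproduct
effacement. -/
lemma biprodEff (n : ℕ) {M I I' : C} (j : M ⟶ I) (hj : Mono j)
    (hj0 : (T.T (n + 1)).map j = 0) (h : M ⟶ I')
    (hh0 : (T.T (n + 1)).map h = 0) :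
    Mono (biprod.lift j h) ∧ (T.T (n + 1)).map (biprod.lift j h) = 0 := by
  constructor
  · have hc : biprod.lift j h ≫ biprod.fst = j := biprod.lift_fst _ _
    haveI : Mono (biprod.lift j h ≫ biprod.fst) := by rw [hc]; exact hj
    exact mono_of_mono _ biprod.fst
  · haveI := T.additive (n + 1)
    have h1 : (T.T (n + 1)).map (biprod.lift j h) ≫ (T.T (n + 1)).map biprod.fst = 0 := by
      rw [← Functor.map_comp, biprod.lift_fst, hj0]
    have h2 : (T.T (n + 1)).map (biprod.lift j h) ≫ (T.T (n + 1)).map biprod.snd = 0 := by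
      rw [← Functor.map_comp, biprod.lift_snd, hh0]
    calc (T.T (n + 1)).map (biprod.lift j h)
        = (T.T (n + 1)).map (biprod.lift j h) ≫ (T.T (n + 1)).map (𝟙 (I ⊞ I')) := by
          rw [CategoryTheory.Functor.map_id, comp_id]
      _ = (T.T (n + 1)).map (biprod.lift j h) ≫
            ((T.T (n + 1)).map (biprod.fst ≫ biprod.inl)
              + (T.T (n + 1)).map (biprod.snd ≫ biprod.inr)) := by
          rw [← Functor.map_add, biprod.total]
      _ = 0 := by
          rw [Functor.map_comp, Functor.map_comp, Preadditive.comp_add, ← assoc, ← assoc, h1, h2,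
            zero_comp, zero_comp, add_zero]

/-- Independence of the choice of effacement. -/
lemma Fmap_eq (n : ℕ) (fn : T.T n ⟶ S.T n) {M I I' : C} (j : M ⟶ I) (hj : Mono j)
    (hj0 : (T.T (n + 1)).map j = 0) (j' : M ⟶ I') (hj' : Mono j')
    (hj0' : (T.T (n + 1)).map j' = 0) :
    Fmap T S n fn j hj hj0 = Fmap T S n fn j' hj' hj0' := by
  obtain ⟨m3, z3⟩ := biprodEff T n j hj hj0 j' hj0'
  have e1 := Fmap_natural T S n fn (𝟙 M) (biprod.lift j j') m3 z3 j hj hj0 biprod.fst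
    (by simp)
  have e2 := Fmap_natural T S n fn (𝟙 M) (biprod.lift j j') m3 z3 j' hj' hj0' biprod.snd
    (by simp)
  simp only [CategoryTheory.Functor.map_id, id_comp, comp_id] at e1 e2
  rw [e1, e2]

variable (heff : ∀ n : ℕ, 1 ≤ n → ∀ M : C, ∃ (I : C) (j : M ⟶ I),
  Mono j ∧ (T.T n).map j = 0)

/-- A chosen effacement object for `M` at level `n + 1`. -/
noncomputable def effObj (n : ℕ) (M : C) : C :=
  (heff (n + 1) (Nat.le_add_left 1 n) M).choose

/-- The chosen effacement mono for `M` at level `n + 1`. -/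
noncomputable def effj (n : ℕ) (M : C) : M ⟶ effObj T heff n M :=
  (heff (n + 1) (Nat.le_add_left 1 n) M).choose_spec.choose

lemma effj_mono (n : ℕ) (M : C) : Mono (effj T heff n M) :=
  (heff (n + 1) (Nat.le_add_left 1 n) M).choose_spec.choose_spec.1

lemma effj_zero (n : ℕ) (M : C) : (T.T (n + 1)).map (effj T heff n M) = 0 :=
  (heff (n + 1) (Nat.le_add_left 1 n) M).choose_spec.choose_spec.2

/-- The extension of `fₙ` to degree `n + 1`. -/
noncomputable def nextTrans (n : ℕ) (fn : T.T n ⟶ S.T n) : T.T (n + 1) ⟶ S.T (n + 1) where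
  app M := Fmap T S n fn (effj T heff n M) (effj_mono T heff n M) (effj_zero T heff n M)
  naturality {M M'} φ := by
    have hφz : (T.T (n + 1)).map (φ ≫ effj T heff n M') = 0 := by
      rw [Functor.map_comp, effj_zero, comp_zero]
    obtain ⟨m3, z3⟩ := biprodEff T n (effj T heff n M) (effj_mono T heff n M)
      (effj_zero T heff n M) (φ ≫ effj T heff n M') hφz
    have e1 := Fmap_natural T S n fn (𝟙 M)
      (biprod.lift (effj T heff n M) (φ ≫ effj T heff n M')) m3 z3
      (effj T heff n M) (effj_mono T heff n M) (effj_zero T heff n M) biprod.fst (by simp)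
    have e2 := Fmap_natural T S n fn φ
      (biprod.lift (effj T heff n M) (φ ≫ effj T heff n M')) m3 z3
      (effj T heff n M') (effj_mono T heff n M') (effj_zero T heff n M') biprod.snd (by simp)
    simp only [CategoryTheory.Functor.map_id, id_comp, comp_id] at e1
    rw [e2, ← e1]

/-- The full family of natural transformations extending `f₀`. -/
noncomputable def fam (f₀ : T.T 0 ⟶ S.T 0) : ∀ n, T.T n ⟶ S.T n
  | 0 => f₀
  | (n + 1) => nextTrans T S heff n (fam f₀ n)

lemma fam_delta (f₀ : T.T 0 ⟶ S.T 0) : IsDeltaMorphism T S (fam T S heff f₀) := by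
  intro Sx hS n
  obtain ⟨I, jB, hjB, hjB0⟩ := heff (n + 1) (Nat.le_add_left 1 n) Sx.X₂
  haveI := hS.mono_f
  haveI := hS.epi_g
  have hjA : Mono (Sx.f ≫ jB) := mono_comp _ _
  have hjA0 : (T.T (n + 1)).map (Sx.f ≫ jB) = 0 := by
    rw [Functor.map_comp, hjB0, comp_zero]
  have happ : (fam T S heff f₀ (n + 1)).app Sx.X₁
      = Fmap T S n (fam T S heff f₀ n) (Sx.f ≫ jB) hjA hjA0 := by
    exact Fmap_eq T S n (fam T S heff f₀ n) (effj T heff n Sx.X₁)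
      (effj_mono T heff n Sx.X₁) (effj_zero T heff n Sx.X₁) (Sx.f ≫ jB) hjA hjA0
  have hz : Sx.f ≫ (jB ≫ cokernel.π (Sx.f ≫ jB)) = 0 := by
    rw [← assoc]; exact cokernel.condition (Sx.f ≫ jB)
  let ψ : Sx ⟶ effS (Sx.f ≫ jB) :=
    { τ₁ := 𝟙 _
      τ₂ := jB
      τ₃ := hS.exact.desc (jB ≫ cokernel.π (Sx.f ≫ jB)) hz
      comm₁₂ := by simp
      comm₂₃ := (hS.exact.g_desc _ _).symm }
  have hδT := T.δ_natural Sx (effS (Sx.f ≫ jB)) hS (effS_SE (Sx.f ≫ jB) hjA) ψ n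
  have hδS := S.δ_natural Sx (effS (Sx.f ≫ jB)) hS (effS_SE (Sx.f ≫ jB) hjA) ψ n
  simp only [CategoryTheory.Functor.map_id, comp_id] at hδT hδS
  rw [happ]
  calc T.δ Sx hS n ≫ Fmap T S n (fam T S heff f₀ n) (Sx.f ≫ jB) hjA hjA0
      = ((T.T n).map ψ.τ₃ ≫ T.δ (effS (Sx.f ≫ jB)) (effS_SE (Sx.f ≫ jB) hjA) n)
          ≫ Fmap T S n (fam T S heff f₀ n) (Sx.f ≫ jB) hjA hjA0 := by
          rw [hδT, show ψ.τ₁ = 𝟙 _ from rfl, CategoryTheory.Functor.map_id, comp_id]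
    _ = (T.T n).map ψ.τ₃ ≫ (fam T S heff f₀ n).app (cokernel (Sx.f ≫ jB))
          ≫ S.δ (effS (Sx.f ≫ jB)) (effS_SE (Sx.f ≫ jB) hjA) n := by
        rw [assoc, δ_Fmap]
    _ = (fam T S heff f₀ n).app Sx.X₃ ≫ (S.T n).map ψ.τ₃
          ≫ S.δ (effS (Sx.f ≫ jB)) (effS_SE (Sx.f ≫ jB) hjA) n := by
        rw [← assoc, ← assoc]; erw [(fam T S heff f₀ n).naturality ψ.τ₃]
    _ = (fam T S heff f₀ n).app Sx.X₃ ≫ S.δ Sx hS n := by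
          rw [hδS, show ψ.τ₁ = 𝟙 _ from rfl, CategoryTheory.Functor.map_id, comp_id]

end Aux

/-- **Grothendieck's Tohoku criterion.** A cohomological
δ-functor `{T_n}` whose components `T_n`, `n ≥ 1`, are all effaceable is a
universal δ-functor: every natural transformation `f₀ : T₀ ⟶ S₀` to the
degree-zero part of another δ-functor extends uniquely to a morphism of
δ-functors. -/
theorem effaceable_delta_functor_universal
    {C : Type u} {D : Type u'} [Category.{v} C] [Category.{v'} D]
    [Abelian C] [Abelian D] (T : CohDeltaFunctor C D)
    (heff : ∀ n : ℕ, 1 ≤ n → ∀ M : C, ∃ (I : C) (j : M ⟶ I),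
      Mono j ∧ (T.T n).map j = 0)
    (S : CohDeltaFunctor C D) (f₀ : T.T 0 ⟶ S.T 0) :
    ∃! f : ∀ n, T.T n ⟶ S.T n, f 0 = f₀ ∧ IsDeltaMorphism T S f := by
  refine ⟨fam T S heff f₀, ⟨rfl, fam_delta T S heff f₀⟩, ?_⟩
  rintro g ⟨hg0, hgδ⟩
  funext n
  induction n with
  | zero => exact hg0
  | succ n ih =>
    apply NatTrans.ext
    funext M
    haveI := epiδ T n (effj T heff n M) (effj_mono T heff n M) (effj_zero T heff n M)
    rw [← cancel_epi (T.δ (effS (effj T heff n M))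
      (effS_SE (effj T heff n M) (effj_mono T heff n M)) n)]
    have h1 := hgδ (effS (effj T heff n M))
      (effS_SE (effj T heff n M) (effj_mono T heff n M)) n
    rw [h1, ih]
    exact (δ_Fmap T S n (fam T S heff f₀ n) (effj T heff n M) (effj_mono T heff n M)
      (effj_zero T heff n M)).symm

end PQPaper
end
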